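/- Let a : Fin m → Fin m → ℂ (coefficients a_{ij}) and set S = Σ_{i,j} |a_{ij}|². Define the Hermitian matrices S'_{pi} = Σ_j a_{pj} conj(a_{ij}) and S''_{pj} = Σ_i a_{ip} conj(a_{ij}). Then the quantity Σ_{i,j,k,p} conj(a_{ij}) a_{ip} a_{jk} conj(a_{pk}) is a nonnegative real number bounded above by S². -/

import Mathlib

/-- the quartic quantity Σ conj(a_{ij}) a_{ip} a_{jk} conj(a_{pk})
is a nonnegative real number bounded above by S². -/
theorem stmt_4 (m : ℕ) (a : Fin m → Fin m → ℂ) (S : ℝ)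
    (hS : S = ∑ i, ∑ j, Complex.normSq (a i j)) :
    ((∑ i, ∑ j, ∑ k, ∑ p,
        starRingEnd ℂ (a i j) * a i p * a j k * starRingEnd ℂ (a p k)).im = 0) ∧
    0 ≤ (∑ i, ∑ j, ∑ k, ∑ p,
        starRingEnd ℂ (a i j) * a i p * a j k * starRingEnd ℂ (a p k)).re ∧
    (∑ i, ∑ j, ∑ k, ∑ p,
        starRingEnd ℂ (a i j) * a i p * a j k * starRingEnd ℂ (a p k)).re ≤ S ^ 2 := by
  set c : Fin m → Fin m → ℂ := fun i k => ∑ j, a i j * starRingEnd ℂ (a j k) with hc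
  have key : (∑ i, ∑ j, ∑ k, ∑ p,
        starRingEnd ℂ (a i j) * a i p * a j k * starRingEnd ℂ (a p k))
      = ∑ i, ∑ k, (Complex.normSq (c i k) : ℂ) := by
    refine Finset.sum_congr rfl fun i _ => ?_
    rw [Finset.sum_comm]
    refine Finset.sum_congr rfl fun k _ => ?_
    have h1 : (Complex.normSq (c i k) : ℂ) = starRingEnd ℂ (c i k) * c i k := by
      rw [mul_comm, Complex.mul_conj]
    have h2 : starRingEnd ℂ (c i k) = ∑ j, starRingEnd ℂ (a i j) * a j k := by
      simp [hc, map_sum]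
    rw [h1, h2, hc, Finset.sum_mul_sum]
    refine Finset.sum_congr rfl fun j _ => Finset.sum_congr rfl fun p _ => ?_
    ring
  have hre : (∑ i, ∑ j, ∑ k, ∑ p,
        starRingEnd ℂ (a i j) * a i p * a j k * starRingEnd ℂ (a p k)).re
      = ∑ i, ∑ k, Complex.normSq (c i k) := by
    rw [key]
    simp [Complex.re_sum]
  refine ⟨?_, ?_, ?_⟩
  · rw [key]
    simp [Complex.im_sum]
  · rw [hre]
    exact Finset.sum_nonneg fun i _ => Finset.sum_nonneg fun k _ => Complex.normSq_nonneg _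
  · rw [hre]
    have hCS : ∀ i k : Fin m, Complex.normSq (c i k)
        ≤ (∑ j, Complex.normSq (a i j)) * (∑ j, Complex.normSq (a j k)) := by
      intro i k
      have h1 : ‖c i k‖ ≤ ∑ j, ‖a i j‖ * ‖a j k‖ := by
        refine (norm_sum_le _ _).trans_eq ?_
        refine Finset.sum_congr rfl fun j _ => ?_
        simp [map_mul]
      have h2 : Complex.normSq (c i k) ≤ (∑ j, ‖a i j‖ * ‖a j k‖) ^ 2 := by
        rw [← Complex.sq_norm]
        exact pow_le_pow_left₀ (norm_nonneg _) h1 2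
      refine h2.trans ?_
      calc (∑ j, ‖a i j‖ * ‖a j k‖) ^ 2
          ≤ (∑ j, ‖a i j‖ ^ 2) * ∑ j, ‖a j k‖ ^ 2 :=
            Finset.sum_mul_sq_le_sq_mul_sq _ _ _
        _ = (∑ j, Complex.normSq (a i j)) * (∑ j, Complex.normSq (a j k)) := by
            simp [Complex.sq_norm]
    calc (∑ i, ∑ k, Complex.normSq (c i k))
        ≤ ∑ i, ∑ k, (∑ j, Complex.normSq (a i j)) * (∑ j, Complex.normSq (a j k)) :=
          Finset.sum_le_sum fun i _ => Finset.sum_le_sum fun k _ => hCS i k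
      _ = (∑ i, ∑ j, Complex.normSq (a i j)) * (∑ k, ∑ j, Complex.normSq (a j k)) := by
          rw [← Finset.sum_mul_sum]
      _ = S ^ 2 := by
          have h3 : (∑ k : Fin m, ∑ j : Fin m, Complex.normSq (a j k)) = S := by
            rw [hS]; exact Finset.sum_comm ..
          rw [h3, ← hS]; ring
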